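/- Let f : ℝ^M → ℝ be twice continuously differentiable with bounded first and second partial derivatives, and fix x^t ∈ ℝ^M. For η > 0 let P_η be the Gaussian measure N(x^t, η I_M) on ℝ^M and define EIG_i^η(x) = ∫ (x_i − x_i⁰) [∫₀¹ (∂f/∂x_i)(x⁰ + α(x − x⁰)) dα] dP_η(x⁰). Then for every i the map x ↦ EIG_i^η(x) is differentiable in x_i, and the limit as η → 0⁺ of (∂EIG_i^η/∂x_i)(x^t) equals (∂f/∂x_i)(x^t), i.e., it equals the LIME attribution score LIME⁰_i(x^t) in the vanishing-regularization limit. -/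

import Mathlib

/-! Differentiating under both integrals, `∂/∂xᵢ IGᵢ(x | x⁰)` is
`∫₀¹ ∂ᵢf + (xᵢ - x⁰ᵢ) ∫₀¹ α ∂ᵢ∂ᵢf` along the segment from `x⁰` to `x`, and the bounds on `f'`
and `f''` dominate it by `C (2 + |xᵢ - x⁰ᵢ|)`, which is integrable against the Gaussian. At
`x = xᵗ` the first term is within `C ‖x⁰ - xᵗ‖` of `∂ᵢf(xᵗ)` because `f'` is `C`-Lipschitz, and
the second term is at most `C ‖x⁰ - xᵗ‖` in size. Hence `∂EIGᵢ^η/∂xᵢ (xᵗ)` is within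
`2C 𝔼‖x⁰ - xᵗ‖ ≤ 2CM√η` of `∂ᵢf(xᵗ)`, a Gaussian's mean absolute deviation being at most its
standard deviation. -/

open MeasureTheory Filter Topology NNReal ProbabilityTheory

lemma integral_abs_sub_integral_le_sqrt_variance {Ω : Type*} [MeasurableSpace Ω]
    {μ : Measure Ω} [IsProbabilityMeasure μ] {X : Ω → ℝ} (hX : MemLp X 2 μ) :
    ∫ ω, |X ω - μ[X]| ∂μ ≤ √Var[X; μ] := by
  have hY : MemLp (fun ω => |X ω - μ[X]|) 2 μ := (hX.sub (memLp_const _)).abs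
  have hY2 : μ[(fun ω => |X ω - μ[X]|) ^ 2] = Var[X; μ] := by
    simp [variance_eq_integral hX.aemeasurable, Pi.pow_apply, sq_abs]
  have h := variance_nonneg (fun ω => |X ω - μ[X]|) μ
  rw [variance_eq_sub hY, hY2, sub_nonneg] at h
  exact (le_abs_self _).trans (Real.abs_le_sqrt h)

lemma integral_abs_sub_le_sqrt_gaussianReal (m : ℝ) (v : ℝ≥0) :
    ∫ x, |x - m| ∂gaussianReal m v ≤ √v := by
  simpa [integral_id_gaussianReal, variance_id_gaussianReal] using
    integral_abs_sub_integral_le_sqrt_variance (memLp_id_gaussianReal (μ := m) (v := v) 2)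

section PiGaussian

variable {ι : Type*} [Fintype ι] (c : ι → ℝ) (v : ℝ≥0)

lemma norm_sub_le_sum_abs_sub (x : ι → ℝ) : ‖x - c‖ ≤ ∑ j, |x j - c j| :=
  (pi_norm_le_iff_of_nonneg (by positivity)).mpr fun j =>
    Finset.single_le_sum (f := fun j => |x j - c j|) (fun _ _ => abs_nonneg _) (Finset.mem_univ j)

lemma integrable_eval_pi_gaussianReal (j : ι) :
    Integrable (fun x => x j) (Measure.pi fun j => gaussianReal (c j) v) :=
  memLp_one_iff_integrable.mp
    ((memLp_id_gaussianReal 1).comp_measurePreserving (measurePreserving_eval _ j))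

lemma integrable_abs_eval_sub_pi_gaussianReal (j : ι) :
    Integrable (fun x => |x j - c j|) (Measure.pi fun j => gaussianReal (c j) v) :=
  ((integrable_eval_pi_gaussianReal c v j).sub (integrable_const _)).abs

lemma integral_abs_eval_sub_pi_gaussianReal_le (j : ι) :
    ∫ x, |x j - c j| ∂(Measure.pi fun j => gaussianReal (c j) v) ≤ √v := by
  calc ∫ x, |x j - c j| ∂(Measure.pi fun j => gaussianReal (c j) v)
      = ∫ y, |y - c j| ∂gaussianReal (c j) v := by
        rw [← (measurePreserving_eval (fun j => gaussianReal (c j) v) j).map_eq,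
          integral_map (measurable_pi_apply j).aemeasurable (by fun_prop)]
    _ ≤ √v := integral_abs_sub_le_sqrt_gaussianReal (c j) v

lemma integrable_norm_sub_pi_gaussianReal :
    Integrable (fun x => ‖x - c‖) (Measure.pi fun j => gaussianReal (c j) v) :=
  (integrable_finsetSum _ fun j _ => integrable_abs_eval_sub_pi_gaussianReal c v j).mono'
    (by fun_prop) (.of_forall fun x => by
      simpa only [norm_norm] using norm_sub_le_sum_abs_sub c x)

lemma integral_norm_sub_pi_gaussianReal_le :
    ∫ x, ‖x - c‖ ∂(Measure.pi fun j => gaussianReal (c j) v) ≤ Fintype.card ι * √v :=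
  calc ∫ x, ‖x - c‖ ∂(Measure.pi fun j => gaussianReal (c j) v)
      ≤ ∫ x, ∑ j, |x j - c j| ∂(Measure.pi fun j => gaussianReal (c j) v) :=
        integral_mono (integrable_norm_sub_pi_gaussianReal c v)
          (integrable_finsetSum _ fun j _ => integrable_abs_eval_sub_pi_gaussianReal c v j)
          (norm_sub_le_sum_abs_sub c)
    _ = ∑ j, ∫ x, |x j - c j| ∂(Measure.pi fun j => gaussianReal (c j) v) :=
        integral_finsetSum _ fun j _ => integrable_abs_eval_sub_pi_gaussianReal c v j
    _ ≤ ∑ _j : ι, √v := Finset.sum_le_sum fun j _ => integral_abs_eval_sub_pi_gaussianReal_le c v j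
    _ = Fintype.card ι * √v := by simp

end PiGaussian

section IntegratedGradient

variable {ι : Type*} [Fintype ι] [DecidableEq ι] {f : (ι → ℝ) → ℝ} {C : ℝ} (i : ι)

lemma ContinuousLinearMap.norm_apply_single_le {F : Type*} [NormedAddCommGroup F]
    [NormedSpace ℝ F] (L : (ι → ℝ) →L[ℝ] F) : ‖L (Pi.single i 1)‖ ≤ ‖L‖ := by
  simpa [Pi.norm_single] using L.le_opNorm (Pi.single i 1)

variable (f)

noncomputable def avgPartial (x x0 : ι → ℝ) : ℝ :=
  ∫ α in (0:ℝ)..1, fderiv ℝ f (x0 + α • (x - x0)) (Pi.single i 1)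

noncomputable def avgSecondPartial (x x0 : ι → ℝ) : ℝ :=
  ∫ α in (0:ℝ)..1, α * fderiv ℝ (fderiv ℝ f) (x0 + α • (x - x0)) (Pi.single i 1) (Pi.single i 1)

noncomputable def integratedGradient (x x0 : ι → ℝ) : ℝ := (x i - x0 i) * avgPartial f i x x0

noncomputable def integratedGradientDeriv (x x0 : ι → ℝ) : ℝ :=
  avgPartial f i x x0 + (x i - x0 i) * avgSecondPartial f i x x0

variable {f}

lemma abs_avgPartial_le (hC1 : ∀ y, ‖fderiv ℝ f y‖ ≤ C) (x x0 : ι → ℝ) :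
    |avgPartial f i x x0| ≤ C := by
  simpa [avgPartial] using intervalIntegral.norm_integral_le_of_norm_le_const (a := 0) (b := 1)
    fun α _ => ((fderiv ℝ f _).norm_apply_single_le i).trans (hC1 _)

lemma norm_mul_second_partial_le (hC2 : ∀ y, ‖fderiv ℝ (fderiv ℝ f) y‖ ≤ C) {α : ℝ}
    (hα : α ∈ Set.uIoc 0 1) (y : ι → ℝ) :
    ‖α * fderiv ℝ (fderiv ℝ f) y (Pi.single i 1) (Pi.single i 1)‖ ≤ C := by
  rw [Set.uIoc_of_le zero_le_one] at hα
  rw [norm_mul, Real.norm_eq_abs, abs_of_pos hα.1, ← one_mul C]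
  exact mul_le_mul hα.2 (((fderiv ℝ (fderiv ℝ f) y _).norm_apply_single_le i).trans
    (((fderiv ℝ (fderiv ℝ f) y).norm_apply_single_le i).trans (hC2 y))) (norm_nonneg _)
    zero_le_one

lemma abs_avgSecondPartial_le (hC2 : ∀ y, ‖fderiv ℝ (fderiv ℝ f) y‖ ≤ C) (x x0 : ι → ℝ) :
    |avgSecondPartial f i x x0| ≤ C := by
  simpa [avgSecondPartial] using intervalIntegral.norm_integral_le_of_norm_le_const (a := 0)
    (b := 1) fun α hα => norm_mul_second_partial_le i hC2 hα (x0 + α • (x - x0))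

lemma abs_integratedGradientDeriv_le (hC1 : ∀ y, ‖fderiv ℝ f y‖ ≤ C)
    (hC2 : ∀ y, ‖fderiv ℝ (fderiv ℝ f) y‖ ≤ C) (x x0 : ι → ℝ) :
    |integratedGradientDeriv f i x x0| ≤ C * (1 + |x i - x0 i|) :=
  calc |integratedGradientDeriv f i x x0|
      ≤ |avgPartial f i x x0| + |x i - x0 i| * |avgSecondPartial f i x x0| :=
        (abs_add_le _ _).trans_eq (by rw [abs_mul])
    _ ≤ C + |x i - x0 i| * C := by
        gcongr
        · exact abs_avgPartial_le i hC1 x x0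
        · exact abs_avgSecondPartial_le i hC2 x x0
    _ = C * (1 + |x i - x0 i|) := by ring

lemma continuous_avgPartial (hf : ContDiff ℝ 1 f) (x : ι → ℝ) :
    Continuous (avgPartial f i x) :=
  intervalIntegral.continuous_parametric_intervalIntegral_of_continuous'
    (((hf.continuous_fderiv one_ne_zero).comp (by fun_prop)).clm_apply continuous_const) 0 1

lemma continuous_avgSecondPartial (hf : ContDiff ℝ 2 f) (x : ι → ℝ) :
    Continuous (avgSecondPartial f i x) :=
  intervalIntegral.continuous_parametric_intervalIntegral_of_continuous'
    (continuous_snd.mul ((((hf.fderiv_right le_rfl).continuous_fderiv one_ne_zero).comp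
      (by fun_prop)).clm_apply continuous_const |>.clm_apply continuous_const)) 0 1

lemma hasDerivAt_avgPartial_update (hf : ContDiff ℝ 2 f)
    (hC2 : ∀ y, ‖fderiv ℝ (fderiv ℝ f) y‖ ≤ C) (x x0 : ι → ℝ) (t : ℝ) :
    HasDerivAt (fun s => avgPartial f i (Function.update x i s) x0)
      (avgSecondPartial f i (Function.update x i t) x0) t := by
  have hf' : ContDiff ℝ 1 (fderiv ℝ f) := hf.fderiv_right le_rfl
  have hintegrand : ∀ α s, HasDerivAt
      (fun s => fderiv ℝ f (x0 + α • (Function.update x i s - x0)) (Pi.single i 1))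
      (α * fderiv ℝ (fderiv ℝ f) (x0 + α • (Function.update x i s - x0)) (Pi.single i 1)
        (Pi.single i 1)) s := by
    intro α s
    have hpath := (((hasDerivAt_update x i s).sub_const x0).const_smul α).const_add x0
    have := (((hf'.differentiable one_ne_zero) _).hasFDerivAt.comp_hasDerivAt s hpath).clm_apply
      (hasDerivAt_const s (Pi.single i (1 : ℝ)))
    simpa using this
  have hcont : ∀ s, Continuous fun α : ℝ =>
      fderiv ℝ f (x0 + α • (Function.update x i s - x0)) (Pi.single i 1) := fun s =>
    (hf'.continuous.comp (by fun_prop)).clm_apply continuous_const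
  have hcont' : Continuous fun α : ℝ => α * fderiv ℝ (fderiv ℝ f)
      (x0 + α • (Function.update x i t - x0)) (Pi.single i 1) (Pi.single i 1) :=
    continuous_id.mul ((((hf'.continuous_fderiv one_ne_zero).comp (by fun_prop)).clm_apply
      continuous_const).clm_apply continuous_const)
  exact (intervalIntegral.hasDerivAt_integral_of_dominated_loc_of_deriv_le
    (bound := fun _ => C) Filter.univ_mem (.of_forall fun s => (hcont s).aestronglyMeasurable)
    ((hcont t).intervalIntegrable _ _) hcont'.aestronglyMeasurable
    (.of_forall fun α hα s _ => norm_mul_second_partial_le i hC2 hα _) intervalIntegrable_const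
    (.of_forall fun α _ s _ => hintegrand α s)).2

lemma hasDerivAt_integratedGradient_update (hf : ContDiff ℝ 2 f)
    (hC2 : ∀ y, ‖fderiv ℝ (fderiv ℝ f) y‖ ≤ C) (x x0 : ι → ℝ) (t : ℝ) :
    HasDerivAt (fun s => integratedGradient f i (Function.update x i s) x0)
      (integratedGradientDeriv f i (Function.update x i t) x0) t := by
  simpa [integratedGradient, integratedGradientDeriv] using
    ((hasDerivAt_id t).sub_const (x0 i)).fun_mul (hasDerivAt_avgPartial_update i hf hC2 x x0 t)

lemma norm_partial_segment_sub_le (hf : ContDiff ℝ 2 f)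
    (hC2 : ∀ y, ‖fderiv ℝ (fderiv ℝ f) y‖ ≤ C) (x x0 : ι → ℝ) {α : ℝ} (hα : α ∈ Set.Icc 0 1) :
    ‖fderiv ℝ f (x0 + α • (x - x0)) (Pi.single i 1) - fderiv ℝ f x (Pi.single i 1)‖
      ≤ C * ‖x0 - x‖ := by
  have hC : 0 ≤ C := (norm_nonneg (fderiv ℝ (fderiv ℝ f) x)).trans (hC2 x)
  have hseg : x0 + α • (x - x0) - x = (1 - α) • (x0 - x) := by module
  calc ‖fderiv ℝ f (x0 + α • (x - x0)) (Pi.single i 1) - fderiv ℝ f x (Pi.single i 1)‖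
      ≤ ‖fderiv ℝ f (x0 + α • (x - x0)) - fderiv ℝ f x‖ :=
        (fderiv ℝ f (x0 + α • (x - x0)) - fderiv ℝ f x).norm_apply_single_le i
    _ ≤ C * ‖x0 + α • (x - x0) - x‖ :=
        convex_univ.norm_image_sub_le_of_norm_fderiv_le
          (fun z _ => (hf.fderiv_right le_rfl).differentiable one_ne_zero z) (fun z _ => hC2 z)
          (Set.mem_univ x) (Set.mem_univ _)
    _ = C * (|1 - α| * ‖x0 - x‖) := by rw [hseg, norm_smul, Real.norm_eq_abs]
    _ ≤ C * ‖x0 - x‖ := by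
        gcongr
        exact mul_le_of_le_one_left (norm_nonneg _)
          (abs_le.2 ⟨by linarith [hα.2], by linarith [hα.1]⟩)

lemma abs_avgPartial_sub_le (hf : ContDiff ℝ 2 f) (hC2 : ∀ y, ‖fderiv ℝ (fderiv ℝ f) y‖ ≤ C)
    (x x0 : ι → ℝ) :
    |avgPartial f i x x0 - fderiv ℝ f x (Pi.single i 1)| ≤ C * ‖x0 - x‖ := by
  have hcont : Continuous fun α : ℝ => fderiv ℝ f (x0 + α • (x - x0)) (Pi.single i 1) :=
    ((hf.continuous_fderiv two_ne_zero).comp (by fun_prop)).clm_apply continuous_const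
  rw [avgPartial, ← Real.norm_eq_abs]
  simpa [intervalIntegral.integral_sub (hcont.intervalIntegrable 0 1) intervalIntegrable_const]
    using intervalIntegral.norm_integral_le_of_norm_le_const (a := 0) (b := 1)
      fun α hα => norm_partial_segment_sub_le i hf hC2 x x0 (α := α) (Set.Ioc_subset_Icc_self
        (by rwa [Set.uIoc_of_le zero_le_one] at hα))

lemma abs_integratedGradientDeriv_sub_le (hf : ContDiff ℝ 2 f)
    (hC2 : ∀ y, ‖fderiv ℝ (fderiv ℝ f) y‖ ≤ C) (x x0 : ι → ℝ) :
    |integratedGradientDeriv f i x x0 - fderiv ℝ f x (Pi.single i 1)| ≤ 2 * C * ‖x0 - x‖ := by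
  have hcoord : |x i - x0 i| ≤ ‖x0 - x‖ := by
    simpa [abs_sub_comm] using norm_le_pi_norm (x0 - x) i
  calc |integratedGradientDeriv f i x x0 - fderiv ℝ f x (Pi.single i 1)|
      ≤ |avgPartial f i x x0 - fderiv ℝ f x (Pi.single i 1)|
          + |x i - x0 i| * |avgSecondPartial f i x x0| := by
        rw [integratedGradientDeriv, add_sub_right_comm, ← abs_mul]
        exact abs_add_le _ _
    _ ≤ C * ‖x0 - x‖ + ‖x0 - x‖ * C := by
        gcongr
        · exact abs_avgPartial_sub_le i hf hC2 x x0
        · exact abs_avgSecondPartial_le i hC2 x x0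
    _ = 2 * C * ‖x0 - x‖ := by ring

variable {μ : Measure (ι → ℝ)}

lemma hasDerivAt_integral_integratedGradient_update [IsFiniteMeasure μ] (hf : ContDiff ℝ 2 f)
    (hC1 : ∀ y, ‖fderiv ℝ f y‖ ≤ C) (hC2 : ∀ y, ‖fderiv ℝ (fderiv ℝ f) y‖ ≤ C)
    (hμ : Integrable (fun x0 => x0 i) μ) (x : ι → ℝ) :
    Integrable (integratedGradientDeriv f i x) μ ∧
      HasDerivAt (fun t => ∫ x0, integratedGradient f i (Function.update x i t) x0 ∂μ)
        (∫ x0, integratedGradientDeriv f i x x0 ∂μ) (x i) := by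
  have hdist : Integrable (fun x0 => |x i - x0 i|) μ := ((integrable_const _).sub hμ).abs
  have hcont : ∀ y, Continuous (integratedGradient f i y) := fun y =>
    (continuous_const.sub (continuous_apply i)).mul (continuous_avgPartial i (hf.of_le one_le_two) y)
  have hcont' : Continuous (integratedGradientDeriv f i x) :=
    (continuous_avgPartial i (hf.of_le one_le_two) x).add
      ((continuous_const.sub (continuous_apply i)).mul (continuous_avgSecondPartial i hf x))
  have hint : Integrable (integratedGradient f i x) μ :=
    (hdist.mul_const C).mono' (hcont x).aestronglyMeasurable (.of_forall fun x0 => by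
      rw [integratedGradient, Real.norm_eq_abs, abs_mul]
      exact mul_le_mul_of_nonneg_left (abs_avgPartial_le i hC1 x x0) (abs_nonneg _))
  have hbound : ∀ x0, ∀ t ∈ Metric.ball (x i) 1,
      ‖integratedGradientDeriv f i (Function.update x i t) x0‖ ≤ C * (2 + |x i - x0 i|) := by
    intro x0 t ht
    have hC : 0 ≤ C := (norm_nonneg (fderiv ℝ f x)).trans (hC1 x)
    have ht' : |t - x i| < 1 := ht
    calc ‖integratedGradientDeriv f i (Function.update x i t) x0‖ ≤ C * (1 + |t - x0 i|) := by
          simpa using abs_integratedGradientDeriv_le i hC1 hC2 (Function.update x i t) x0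
      _ ≤ C * (2 + |x i - x0 i|) :=
          mul_le_mul_of_nonneg_left (by linarith [abs_sub_le t (x i) (x0 i)]) hC
  simpa only [Function.update_eq_self] using hasDerivAt_integral_of_dominated_loc_of_deriv_le
    (F := fun t x0 => integratedGradient f i (Function.update x i t) x0)
    (F' := fun t x0 => integratedGradientDeriv f i (Function.update x i t) x0)
    (Metric.ball_mem_nhds (x i) one_pos)
    (.of_forall fun t => (hcont _).aestronglyMeasurable)
    (by simpa only [Function.update_eq_self] using hint)
    (by simpa only [Function.update_eq_self] using hcont'.aestronglyMeasurable)
    (.of_forall hbound) (((integrable_const 2).add hdist).const_mul C)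
    (.of_forall fun x0 t _ => hasDerivAt_integratedGradient_update i hf hC2 x x0 t)

lemma abs_integral_integratedGradientDeriv_sub_le [IsProbabilityMeasure μ] (hf : ContDiff ℝ 2 f)
    (hC2 : ∀ y, ‖fderiv ℝ (fderiv ℝ f) y‖ ≤ C) {x : ι → ℝ}
    (hint : Integrable (integratedGradientDeriv f i x) μ)
    (hnorm : Integrable (fun x0 => ‖x0 - x‖) μ) :
    |∫ x0, integratedGradientDeriv f i x x0 ∂μ - fderiv ℝ f x (Pi.single i 1)|
      ≤ 2 * C * ∫ x0, ‖x0 - x‖ ∂μ :=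
  calc |∫ x0, integratedGradientDeriv f i x x0 ∂μ - fderiv ℝ f x (Pi.single i 1)|
      = |∫ x0, (integratedGradientDeriv f i x x0 - fderiv ℝ f x (Pi.single i 1)) ∂μ| := by
        rw [integral_sub hint (integrable_const _), integral_const, probReal_univ, one_smul]
    _ ≤ ∫ x0, |integratedGradientDeriv f i x x0 - fderiv ℝ f x (Pi.single i 1)| ∂μ :=
        abs_integral_le_integral_abs
    _ ≤ ∫ x0, 2 * C * ‖x0 - x‖ ∂μ :=
        integral_mono (hint.sub (integrable_const _)).abs (hnorm.const_mul _)
          fun x0 => abs_integratedGradientDeriv_sub_le i hf hC2 x x0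
    _ = 2 * C * ∫ x0, ‖x0 - x‖ ∂μ := integral_const_mul _ _

end IntegratedGradient

/-- For `f` twice continuously differentiable with bounded first and second
derivatives, the expected integrated gradient `EIGᵢ^η` with localized Gaussian
baseline distribution `N(xᵗ, η I_M)` is differentiable in the coordinate `xᵢ`, and as
`η → 0⁺` its partial derivative at `xᵗ` tends to `∂ᵢf(xᵗ)`, the LIME attribution
score `LIME⁰ᵢ(xᵗ)` in the vanishing-regularization limit. -/
theorem stmt_9 (M : ℕ) (f : (Fin M → ℝ) → ℝ) (hf : ContDiff ℝ 2 f)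
    (C : ℝ) (hC1 : ∀ x : Fin M → ℝ, ‖fderiv ℝ f x‖ ≤ C)
    (hC2 : ∀ x : Fin M → ℝ, ‖fderiv ℝ (fderiv ℝ f) x‖ ≤ C)
    (xt : Fin M → ℝ)
    (P : ℝ≥0 → Measure (Fin M → ℝ))
    (hP : ∀ η : ℝ≥0, P η = Measure.pi fun i => ProbabilityTheory.gaussianReal (xt i) η)
    (EIG : ℝ≥0 → Fin M → (Fin M → ℝ) → ℝ)
    (hEIG : ∀ (η : ℝ≥0) (i : Fin M) (x : Fin M → ℝ),
      EIG η i x = ∫ x0 : Fin M → ℝ,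
        (x i - x0 i) *
          (∫ α in (0:ℝ)..1, fderiv ℝ f (x0 + α • (x - x0)) (Pi.single i 1)) ∂(P η)) :
    ∀ i : Fin M,
      (∀ η : ℝ≥0, 0 < η → ∀ x : Fin M → ℝ,
        DifferentiableAt ℝ (fun t : ℝ => EIG η i (Function.update x i t)) (x i)) ∧
      Tendsto (fun η : ℝ≥0 => deriv (fun t : ℝ => EIG η i (Function.update xt i t)) (xt i))
        (𝓝[>] 0) (𝓝 (fderiv ℝ f xt (Pi.single i 1))) := by
  intro i
  have hEIG' : ∀ η, EIG η i = fun x => ∫ x0, integratedGradient f i x x0 ∂P η :=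
    fun η => funext (hEIG η i)
  have hderiv : ∀ η x, Integrable (integratedGradientDeriv f i x) (P η) ∧
      HasDerivAt (fun t => EIG η i (Function.update x i t))
        (∫ x0, integratedGradientDeriv f i x x0 ∂P η) (x i) := by
    intro η x
    simp only [hEIG', hP]
    exact hasDerivAt_integral_integratedGradient_update i hf hC1 hC2
      (integrable_eval_pi_gaussianReal xt η i) x
  have hC : 0 ≤ C := (norm_nonneg _).trans (hC1 xt)
  have hbound : ∀ η, dist (deriv (fun t => EIG η i (Function.update xt i t)) (xt i))
      (fderiv ℝ f xt (Pi.single i 1)) ≤ 2 * C * (Fintype.card (Fin M) * √η) := by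
    intro η
    obtain ⟨hint, hD⟩ := hderiv η xt
    rw [hD.deriv, Real.dist_eq, hP]
    rw [hP] at hint
    exact (abs_integral_integratedGradientDeriv_sub_le i hf hC2 hint
      (integrable_norm_sub_pi_gaussianReal xt η)).trans
      (mul_le_mul_of_nonneg_left (integral_norm_sub_pi_gaussianReal_le xt η) (by positivity))
  have hlim : Tendsto (fun η : ℝ≥0 => 2 * C * (Fintype.card (Fin M) * √η)) (𝓝[>] 0) (𝓝 0) := by
    refine tendsto_nhdsWithin_of_tendsto_nhds ?_
    simpa using ((NNReal.continuous_coe.sqrt.const_mul _).const_mul _).tendsto 0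
  exact ⟨fun η _ x => (hderiv η x).2.differentiableAt,
    tendsto_iff_dist_tendsto_zero.2 (squeeze_zero (fun _ => dist_nonneg) hbound hlim)⟩
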